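/- For an irrational x in (0,1), the condition lim_{j→∞} (log q_{j+1}(x))/q_j(x) = 0 holds if and only if lim_{j→∞} β_{j-1}(x)·a_j(x)·log a_j(x) = 0. -/

import Mathlib

/-!
The identity `q_{j+1} β_j + q_j β_{j+1} = 1` pins `β_j` between `1 / (2 q_{j+1})` and
`1 / q_{j+1}`, and `a_{j+1} q_j ≤ q_{j+1} ≤ 2 a_{j+1} q_j`. So `β_j a_{j+1} log a_{j+1}` is within
a factor `4` of `log a_{j+1} / q_j`, while `log q_{j+1} / q_j` exceeds `log a_{j+1} / q_j` by at most
`log (2 q_j) / q_j`, which tends to `0` because `q_j → ∞`.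
-/

open Filter Topology Finset

/-- Gauss map `G(y) = 1/y - ⌊1/y⌋`. -/
noncomputable def gauss (x : ℝ) : ℝ := Int.fract x⁻¹

/-- `pa x j` is the `j`-th continued fraction partial quotient `a_j(x) = ⌊1/G^{j-1}(x)⌋` (for `j ≥ 1`). -/
noncomputable def pa (x : ℝ) (j : ℕ) : ℤ := ⌊(gauss^[j-1] x)⁻¹⌋

/-- `beta x j = β_j(x) = ∏_{i=0}^{j} G^i(x)`. -/
noncomputable def beta (x : ℝ) (j : ℕ) : ℝ := ∏ i ∈ Finset.range (j+1), gauss^[i] x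

/-- Convergent denominators: `q_0 = 1`, `q_1 = a_1`, `q_j = a_j q_{j-1} + q_{j-2}`. -/
noncomputable def q (x : ℝ) : ℕ → ℤ
  | 0 => 1
  | 1 => pa x 1
  | (n+2) => pa x (n+2) * q x (n+1) + q x n

open Real

section SqueezeZero

variable {ι : Type*} {l : Filter ι} {f g r : ι → ℝ}

theorem tendsto_zero_iff_of_le_of_le_const_mul {c : ℝ} (hf : ∀ i, 0 ≤ f i)
    (hfg : ∀ i, f i ≤ g i) (hgf : ∀ i, g i ≤ c * f i) :
    Tendsto f l (𝓝 0) ↔ Tendsto g l (𝓝 0) :=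
  ⟨fun h => squeeze_zero (fun i => (hf i).trans (hfg i)) hgf (by simpa using h.const_mul c),
    fun h => squeeze_zero hf hfg h⟩

theorem tendsto_zero_iff_of_le_of_le_add (hf : ∀ i, 0 ≤ f i) (hfg : ∀ i, f i ≤ g i)
    (hgf : ∀ i, g i ≤ f i + r i) (hr : Tendsto r l (𝓝 0)) :
    Tendsto f l (𝓝 0) ↔ Tendsto g l (𝓝 0) :=
  ⟨fun h => squeeze_zero (fun i => (hf i).trans (hfg i)) hgf (by simpa using h.add hr),
    fun h => squeeze_zero hf hfg h⟩

end SqueezeZero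

theorem tendsto_log_two_mul_div_atTop :
    Tendsto (fun t : ℝ => log (2 * t) / t) atTop (𝓝 0) := by
  have h := (isLittleO_log_id_atTop.tendsto_div_nhds_zero.comp
    (tendsto_id.const_mul_atTop two_pos)).const_mul 2
  rw [mul_zero] at h
  refine h.congr' ((eventually_ne_atTop 0).mono fun t ht => ?_)
  simp only [Function.comp_apply, id]
  field_simp

section Gauss

variable {x y : ℝ}

theorem gauss_lt_one : gauss y < 1 := Int.fract_lt_one _

theorem irrational_gauss (h : Irrational y) : Irrational (gauss y) :=
  h.inv.sub_intCast ⌊y⁻¹⌋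

theorem gauss_pos (h : Irrational y) : 0 < gauss y :=
  (Int.fract_nonneg _).lt_of_ne' (irrational_gauss h).ne_zero

theorem gauss_iterate_succ (j : ℕ) :
    gauss^[j + 1] x = (gauss^[j] x)⁻¹ - pa x (j + 1) := by
  rw [Function.iterate_succ_apply']
  rfl

theorem irrational_gauss_iterate (hirr : Irrational x) (i : ℕ) : Irrational (gauss^[i] x) := by
  induction i with
  | zero => exact hirr
  | succ i ih => rw [Function.iterate_succ_apply']; exact irrational_gauss ih

theorem gauss_iterate_mem_Ioo (hx : x ∈ Set.Ioo 0 1) (hirr : Irrational x) :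
    ∀ i, gauss^[i] x ∈ Set.Ioo 0 1
  | 0 => hx
  | i + 1 => by
    rw [Function.iterate_succ_apply']
    exact ⟨gauss_pos (irrational_gauss_iterate hirr i), gauss_lt_one⟩

theorem one_le_pa (hx : x ∈ Set.Ioo 0 1) (hirr : Irrational x) (j : ℕ) :
    1 ≤ pa x (j + 1) := by
  obtain ⟨h0, h1⟩ := gauss_iterate_mem_Ioo hx hirr j
  exact Int.le_floor.2 (by exact_mod_cast ((one_lt_inv₀ h0).2 h1).le)

end Gauss

section Denominators

variable {x : ℝ}

theorem q_nonneg (ha : ∀ j, 1 ≤ pa x (j + 1)) (n : ℕ) : 0 ≤ q x n := by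
  induction n using Nat.twoStepInduction with
  | zero => exact zero_le_one
  | one => exact zero_le_one.trans (ha 0)
  | more n ih₀ ih₁ =>
    have := ha (n + 1)
    show 0 ≤ pa x (n + 2) * q x (n + 1) + q x n
    positivity

theorem q_le_q_succ (ha : ∀ j, 1 ≤ pa x (j + 1)) : ∀ n, q x n ≤ q x (n + 1)
  | 0 => ha 0
  | n + 1 => by
    show q x (n + 1) ≤ pa x (n + 2) * q x (n + 1) + q x n
    nlinarith [ha (n + 1), q_nonneg ha n, q_nonneg ha (n + 1)]

theorem one_le_q (ha : ∀ j, 1 ≤ pa x (j + 1)) (n : ℕ) : 1 ≤ q x n :=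
  monotone_nat_of_le_succ (q_le_q_succ ha) n.zero_le

theorem natCast_le_q (ha : ∀ j, 1 ≤ pa x (j + 1)) (n : ℕ) : (n : ℤ) ≤ q x n := by
  induction n using Nat.twoStepInduction with
  | zero => exact zero_le_one
  | one => exact ha 0
  | more n _ ih =>
    show (n : ℤ) + 1 + 1 ≤ pa x (n + 2) * q x (n + 1) + q x n
    push_cast at ih
    nlinarith [mul_le_mul_of_nonneg_right (ha (n + 1)) (q_nonneg ha (n + 1)), one_le_q ha n]

theorem tendsto_q_atTop (ha : ∀ j, 1 ≤ pa x (j + 1)) :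
    Tendsto (fun n => (q x n : ℝ)) atTop atTop :=
  tendsto_atTop_mono (fun n => by exact_mod_cast natCast_le_q ha n) tendsto_natCast_atTop_atTop

theorem pa_mul_q_le_q_succ (ha : ∀ j, 1 ≤ pa x (j + 1)) :
    ∀ j, pa x (j + 1) * q x j ≤ q x (j + 1)
  | 0 => (mul_one _).le
  | j + 1 => le_add_of_nonneg_right (q_nonneg ha j)

theorem q_succ_le_two_mul_pa_mul_q (ha : ∀ j, 1 ≤ pa x (j + 1)) :
    ∀ j, q x (j + 1) ≤ 2 * pa x (j + 1) * q x j
  | 0 => by show pa x 1 ≤ 2 * pa x 1 * 1; linarith [ha 0]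
  | j + 1 => by
    show pa x (j + 2) * q x (j + 1) + q x j ≤ 2 * pa x (j + 2) * q x (j + 1)
    nlinarith [ha (j + 1), q_le_q_succ ha j, q_nonneg ha (j + 1)]

end Denominators

section Beta

variable {x : ℝ}

theorem beta_succ (x : ℝ) (j : ℕ) : beta x (j + 1) = beta x j * gauss^[j + 1] x :=
  prod_range_succ _ _

theorem beta_pos (hx : x ∈ Set.Ioo 0 1) (hirr : Irrational x) (j : ℕ) : 0 < beta x j :=
  prod_pos fun i _ => (gauss_iterate_mem_Ioo hx hirr i).1

theorem beta_succ_lt (hx : x ∈ Set.Ioo 0 1) (hirr : Irrational x) (j : ℕ) :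
    beta x (j + 1) < beta x j := by
  rw [beta_succ]
  exact mul_lt_of_lt_one_right (beta_pos hx hirr j) (gauss_iterate_mem_Ioo hx hirr _).2

theorem beta_add_two (hx : x ∈ Set.Ioo 0 1) (hirr : Irrational x) (j : ℕ) :
    beta x (j + 2) = beta x j - pa x (j + 2) * beta x (j + 1) := by
  have hG : gauss^[j + 1] x ≠ 0 := (gauss_iterate_mem_Ioo hx hirr _).1.ne'
  rw [beta_succ x (j + 1), gauss_iterate_succ, beta_succ]
  field_simp

theorem q_succ_mul_beta_add_q_mul_beta_succ (hx : x ∈ Set.Ioo 0 1) (hirr : Irrational x) :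
    ∀ j, (q x (j + 1) : ℝ) * beta x j + q x j * beta x (j + 1) = 1
  | 0 => by
    have hx0 : x ≠ 0 := hx.1.ne'
    have hb0 : beta x 0 = x := by simp [beta]
    rw [beta_succ, gauss_iterate_succ, hb0]
    show (pa x 1 : ℝ) * x + ((1 : ℤ) : ℝ) * (x * (x⁻¹ - pa x 1)) = 1
    field_simp
    ring
  | j + 1 => by
    have ih := q_succ_mul_beta_add_q_mul_beta_succ hx hirr j
    rw [beta_add_two hx hirr, show q x (j + 2) = pa x (j + 2) * q x (j + 1) + q x j from rfl]
    push_cast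
    linear_combination ih

theorem q_succ_mul_beta_lt_one (hx : x ∈ Set.Ioo 0 1) (hirr : Irrational x) (j : ℕ) :
    (q x (j + 1) : ℝ) * beta x j < 1 := by
  have hq : (0 : ℝ) < q x j := by exact_mod_cast (one_le_pa hx hirr |> one_le_q) j
  nlinarith [q_succ_mul_beta_add_q_mul_beta_succ hx hirr j, beta_pos hx hirr (j + 1)]

theorem one_lt_two_mul_q_succ_mul_beta (hx : x ∈ Set.Ioo 0 1) (hirr : Irrational x) (j : ℕ) :
    1 < 2 * ((q x (j + 1) : ℝ) * beta x j) := by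
  have ha := one_le_pa hx hirr
  have hq : (0 : ℝ) < q x j := by exact_mod_cast one_le_q ha j
  have hqq : (q x j : ℝ) ≤ q x (j + 1) := by exact_mod_cast q_le_q_succ ha j
  nlinarith [q_succ_mul_beta_add_q_mul_beta_succ hx hirr j,
    mul_lt_mul_of_pos_left (beta_succ_lt hx hirr j) hq,
    mul_le_mul_of_nonneg_right hqq (beta_pos hx hirr j).le]

end Beta

section Estimates

variable {x : ℝ}

theorem beta_mul_pa_mul_q_le_one (hx : x ∈ Set.Ioo 0 1) (hirr : Irrational x) (j : ℕ) :
    beta x j * pa x (j + 1) * q x j ≤ 1 := by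
  have h : ((pa x (j + 1) * q x j : ℤ) : ℝ) ≤ q x (j + 1) :=
    Int.cast_le.2 (pa_mul_q_le_q_succ (one_le_pa hx hirr) j)
  push_cast at h
  nlinarith [q_succ_mul_beta_lt_one hx hirr j, mul_le_mul_of_nonneg_left h (beta_pos hx hirr j).le]

theorem one_le_four_mul_beta_mul_pa_mul_q (hx : x ∈ Set.Ioo 0 1) (hirr : Irrational x) (j : ℕ) :
    1 ≤ 4 * (beta x j * pa x (j + 1) * q x j) := by
  have h : (q x (j + 1) : ℝ) ≤ ((2 * pa x (j + 1) * q x j : ℤ) : ℝ) :=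
    Int.cast_le.2 (q_succ_le_two_mul_pa_mul_q (one_le_pa hx hirr) j)
  push_cast at h
  nlinarith [one_lt_two_mul_q_succ_mul_beta hx hirr j,
    mul_le_mul_of_nonneg_left h (beta_pos hx hirr j).le]

theorem beta_mul_pa_mul_log_pa_le (hx : x ∈ Set.Ioo 0 1) (hirr : Irrational x) (j : ℕ) :
    beta x j * pa x (j + 1) * log (pa x (j + 1)) ≤ log (pa x (j + 1)) / q x j := by
  have hq : (0 : ℝ) < q x j := by exact_mod_cast one_le_q (one_le_pa hx hirr) j
  have hlog : 0 ≤ log (pa x (j + 1)) := log_nonneg (by exact_mod_cast one_le_pa hx hirr j)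
  rw [le_div_iff₀ hq]
  nlinarith [mul_le_mul_of_nonneg_right (beta_mul_pa_mul_q_le_one hx hirr j) hlog]

theorem log_pa_div_q_le_four_mul (hx : x ∈ Set.Ioo 0 1) (hirr : Irrational x) (j : ℕ) :
    log (pa x (j + 1)) / q x j ≤ 4 * (beta x j * pa x (j + 1) * log (pa x (j + 1))) := by
  have hq : (0 : ℝ) < q x j := by exact_mod_cast one_le_q (one_le_pa hx hirr) j
  have hlog : 0 ≤ log (pa x (j + 1)) := log_nonneg (by exact_mod_cast one_le_pa hx hirr j)
  rw [div_le_iff₀ hq]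
  nlinarith [mul_le_mul_of_nonneg_right (one_le_four_mul_beta_mul_pa_mul_q hx hirr j) hlog]

theorem log_pa_div_q_le_log_q_succ_div_q (hx : x ∈ Set.Ioo 0 1) (hirr : Irrational x) (j : ℕ) :
    log (pa x (j + 1)) / q x j ≤ log (q x (j + 1)) / q x j := by
  have ha := one_le_pa hx hirr
  have h : pa x (j + 1) ≤ q x (j + 1) :=
    (le_mul_of_one_le_right (zero_le_one.trans (ha j)) (one_le_q ha j)).trans
      (pa_mul_q_le_q_succ ha j)
  gcongr
  · exact_mod_cast zero_le_one.trans (one_le_q ha j)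
  · exact_mod_cast ha j

theorem log_q_succ_div_q_le (hx : x ∈ Set.Ioo 0 1) (hirr : Irrational x) (j : ℕ) :
    log (q x (j + 1)) / q x j ≤ log (pa x (j + 1)) / q x j + log (2 * q x j) / q x j := by
  have ha := one_le_pa hx hirr
  have hq : (0 : ℝ) < q x j := by exact_mod_cast one_le_q ha j
  have hpa : (0 : ℝ) < pa x (j + 1) := by exact_mod_cast ha j
  have h : (q x (j + 1) : ℝ) ≤ ((2 * pa x (j + 1) * q x j : ℤ) : ℝ) :=
    Int.cast_le.2 (q_succ_le_two_mul_pa_mul_q ha j)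
  rw [← add_div, ← log_mul hpa.ne' (by positivity)]
  gcongr
  · exact_mod_cast one_le_q ha (j + 1) |>.trans_lt' zero_lt_one
  · push_cast at h; linarith

end Estimates

/-- `log q_{j+1}/q_j → 0` iff `β_{j-1} a_j log a_j → 0`. -/
theorem stmt4 (x : ℝ) (hx : x ∈ Set.Ioo (0:ℝ) 1) (hirr : Irrational x) :
    Tendsto (fun j : ℕ => Real.log (q x (j+1)) / (q x j : ℝ)) atTop (nhds 0) ↔
      Tendsto (fun j : ℕ => beta x j * (pa x (j+1) : ℝ) * Real.log (pa x (j+1))) atTop (nhds 0) := by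
  have ha := one_le_pa hx hirr
  have hlog : ∀ j, 0 ≤ log (pa x (j + 1)) := fun j => log_nonneg (by exact_mod_cast ha j)
  have hL : ∀ j, 0 ≤ log (pa x (j + 1)) / q x j := fun j =>
    div_nonneg (hlog j) (Int.cast_nonneg (q_nonneg ha j))
  have hB : ∀ j, 0 ≤ beta x j * pa x (j + 1) * log (pa x (j + 1)) := fun j =>
    mul_nonneg (mul_nonneg (beta_pos hx hirr j).le (Int.cast_nonneg (zero_le_one.trans (ha j))))
      (hlog j)
  rw [← tendsto_zero_iff_of_le_of_le_add hL (log_pa_div_q_le_log_q_succ_div_q hx hirr)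
      (log_q_succ_div_q_le hx hirr) (tendsto_log_two_mul_div_atTop.comp (tendsto_q_atTop ha)),
    tendsto_zero_iff_of_le_of_le_const_mul hB (beta_mul_pa_mul_log_pa_le hx hirr)
      (log_pa_div_q_le_four_mul hx hirr)]
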